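/- arXiv:2605.08031 — 5 statements merged into one kernel-verified Lean document; each statement's English description precedes it below -/
import Mathlib

section
/- Let Y be a finite nonempty set, π_ref a strictly positive probability distribution on Y, β > 0, R_pen: Y → ℝ a reward, and R_abs: Y → ℝ a reward with R_abs(y) ≥ 0 for all y. Suppose there exists y0 ∈ Y with R_abs(y0) > 0. Define π_pen(y) = π_ref(y)exp(R_pen(y)/β)/Z_pen and π_comp(y) = π_ref(y)exp((R_pen(y)+R_abs(y))/β)/Z_comp, where Z_pen and Z_comp are the corresponding normalizing constants. Then for every y ∈ Y with R_abs(y) = 0, we have π_comp(y) < π_pen(y). -/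
theorem stmt_2 {Y : Type*} [Fintype Y] [Nonempty Y]
    (πref : Y → ℝ) (hpos : ∀ y, 0 < πref y) (hsum : ∑ y, πref y = 1)
    (β : ℝ) (hβ : 0 < β) (Rpen Rabs : Y → ℝ)
    (habs_nonneg : ∀ y, 0 ≤ Rabs y) (y0 : Y) (hy0 : 0 < Rabs y0)
    (y : Y) (hy : Rabs y = 0) :
    πref y * Real.exp ((Rpen y + Rabs y) / β) /
        (∑ y', πref y' * Real.exp ((Rpen y' + Rabs y') / β)) <
      πref y * Real.exp (Rpen y / β) /
        (∑ y', πref y' * Real.exp (Rpen y' / β)) := by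
  have hZp : 0 < ∑ y', πref y' * Real.exp (Rpen y' / β) :=
    Finset.sum_pos (fun i _ => mul_pos (hpos i) (Real.exp_pos _)) Finset.univ_nonempty
  have hlt : ∑ y', πref y' * Real.exp (Rpen y' / β) <
      ∑ y', πref y' * Real.exp ((Rpen y' + Rabs y') / β) := by
    apply Finset.sum_lt_sum
    · intro i _
      exact mul_le_mul_of_nonneg_left
        (Real.exp_le_exp.mpr (by
          gcongr <;> linarith [habs_nonneg i])) (hpos i).le
    · refine ⟨y0, Finset.mem_univ _, ?_⟩
      apply mul_lt_mul_of_pos_left _ (hpos y0)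
      exact Real.exp_lt_exp.mpr (by gcongr <;> linarith)
  rw [hy, add_zero]
  exact div_lt_div_of_pos_left (mul_pos (hpos y) (Real.exp_pos _)) hZp hlt
end

section
/- Under the setting of the composite-reward policies: let H ⊆ Y be a nonempty subset (the hallucinated sequences) such that R_abs(y) = 0 for all y ∈ H, R_abs(y) ≥ 0 on Y, and there exists y0 ∈ Y with π_ref(y0) > 0 and R_abs(y0) > 0. Then the total hallucination probability is strictly reduced: Σ_{y∈H} π_comp(y) < Σ_{y∈H} π_pen(y). -/
theorem stmt_3 {Y : Type*} [Fintype Y] [Nonempty Y]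
    (πref : Y → ℝ) (hpos : ∀ y, 0 < πref y) (hsum : ∑ y, πref y = 1)
    (β : ℝ) (hβ : 0 < β) (Rpen Rabs : Y → ℝ)
    (habs_nonneg : ∀ y, 0 ≤ Rabs y)
    (H : Finset Y) (hH : H.Nonempty) (hH0 : ∀ y ∈ H, Rabs y = 0)
    (y0 : Y) (hy0pos : 0 < πref y0) (hy0 : 0 < Rabs y0) :
    (∑ y ∈ H, πref y * Real.exp ((Rpen y + Rabs y) / β) /
        (∑ y', πref y' * Real.exp ((Rpen y' + Rabs y') / β))) <
      ∑ y ∈ H, πref y * Real.exp (Rpen y / β) /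
        (∑ y', πref y' * Real.exp (Rpen y' / β)) := by
  set Zp := ∑ y', πref y' * Real.exp (Rpen y' / β) with hZp_def
  set Zc := ∑ y', πref y' * Real.exp ((Rpen y' + Rabs y') / β) with hZc_def
  have hterm : ∀ y : Y, 0 < πref y * Real.exp (Rpen y / β) := fun y =>
    mul_pos (hpos y) (Real.exp_pos _)
  have hZp : 0 < Zp := Finset.sum_pos (fun y _ => hterm y) Finset.univ_nonempty
  have hZpZc : Zp < Zc := by
    refine Finset.sum_lt_sum ?_ ⟨y0, Finset.mem_univ y0, ?_⟩
    · intro i _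
      have : Rpen i / β ≤ (Rpen i + Rabs i) / β := by
        gcongr; linarith [habs_nonneg i]
      exact mul_le_mul_of_nonneg_left (Real.exp_le_exp.2 this) (hpos i).le
    · have : Rpen y0 / β < (Rpen y0 + Rabs y0) / β := by
        apply div_lt_div_of_pos_right _ hβ; linarith
      exact mul_lt_mul_of_pos_left (Real.exp_lt_exp.2 this) hy0pos
  have hLHS : (∑ y ∈ H, πref y * Real.exp ((Rpen y + Rabs y) / β) / Zc)
      = (∑ y ∈ H, πref y * Real.exp (Rpen y / β)) / Zc := by
    rw [Finset.sum_div]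
    exact Finset.sum_congr rfl fun y hy => by rw [hH0 y hy, add_zero]
  have hRHS : (∑ y ∈ H, πref y * Real.exp (Rpen y / β) / Zp)
      = (∑ y ∈ H, πref y * Real.exp (Rpen y / β)) / Zp := by
    rw [Finset.sum_div]
  rw [hLHS, hRHS]
  exact div_lt_div_of_pos_left (Finset.sum_pos (fun y _ => hterm y) hH) hZp hZpZc
end

section
/- Monotonicity of forgetting in the penalty strength: let Y be finite nonempty, π_ref strictly positive, β > 0, and n: Y → ℕ a count function that is not constant on Y. For λ ≥ 0, define π_λ(y) = π_ref(y)exp(−λ·n(y)/β)/Z_λ. Then the expected count E_{π_λ}[n] = Σ_y π_λ(y)·n(y) is strictly decreasing in λ. -/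
/-!
Tilting the weights from `exp (-a s)` to `exp (-b s)` with `a < b` multiplies them by
`exp (-(b - a) s)`, a strictly decreasing function of the score `s`. For any two weight
vectors `u, v` one has
`2 ((∑ v s) (∑ u) - (∑ u s) (∑ v)) = ∑_{y,z} (s y - s z) (v y u z - u y v z)`,
and a decreasing likelihood ratio `v / u` makes every summand nonpositive, and negative as soon
as `s y ≠ s z`. Hence the `v`-mean of `s` is strictly below the `u`-mean.
-/

open Finset Real

section WeightedMean

variable {Y : Type*} [Fintype Y]

noncomputable def weightedMean (w s : Y → ℝ) : ℝ := ∑ y, w y / (∑ y', w y') * s y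

lemma weightedMean_eq_div (w s : Y → ℝ) :
    weightedMean w s = (∑ y, w y * s y) / ∑ y, w y := by
  simp only [weightedMean, sum_div, div_mul_eq_mul_div]

lemma sum_sum_mul_cross_eq (u v s : Y → ℝ) :
    ∑ y, ∑ z, (s y - s z) * (v y * u z - u y * v z) =
      2 * ((∑ y, v y * s y) * ∑ y, u y - (∑ y, u y * s y) * ∑ y, v y) := by
  have hswap : ∑ y, ∑ z, (s z * v y * u z - s z * u y * v z) =
      ∑ y, ∑ z, (s y * u y * v z - s y * v y * u z) := by
    rw [sum_comm]; simp only [mul_comm, mul_left_comm]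
  calc ∑ y, ∑ z, (s y - s z) * (v y * u z - u y * v z)
      = ∑ y, ∑ z, (s y * v y * u z - s y * u y * v z)
          - ∑ y, ∑ z, (s z * v y * u z - s z * u y * v z) := by
        rw [← sum_sub_distrib]; refine sum_congr rfl fun y _ => ?_
        rw [← sum_sub_distrib]; exact sum_congr rfl fun z _ => by ring
    _ = _ := by
        rw [hswap]; simp only [sum_sub_distrib, sum_mul_sum]
        simp only [mul_comm, mul_left_comm]; ring

lemma weightedMean_lt_of_cross_nonpos {u v s : Y → ℝ}
    (hu : 0 < ∑ y, u y) (hv : 0 < ∑ y, v y)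
    (hcross : ∀ y z, (s y - s z) * (v y * u z - u y * v z) ≤ 0)
    (hstrict : ∃ y z, (s y - s z) * (v y * u z - u y * v z) < 0) :
    weightedMean v s < weightedMean u s := by
  obtain ⟨y₀, z₀, h₀⟩ := hstrict
  have hneg : ∑ y, ∑ z, (s y - s z) * (v y * u z - u y * v z) < 0 :=
    sum_neg' (fun y _ => sum_nonpos fun z _ => hcross y z)
      ⟨y₀, mem_univ _, sum_neg' (fun z _ => hcross y₀ z) ⟨z₀, mem_univ _, h₀⟩⟩
  rw [sum_sum_mul_cross_eq] at hneg
  rw [weightedMean_eq_div, weightedMean_eq_div, div_lt_div_iff₀ hv hu]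
  linarith

end WeightedMean

lemma mul_exp_mul_sub_one_neg {c x : ℝ} (hc : c < 0) (hx : x ≠ 0) :
    x * (exp (c * x) - 1) < 0 := by
  rcases hx.lt_or_gt with hx | hx
  · exact mul_neg_of_neg_of_pos hx (sub_pos.2 (one_lt_exp_iff.2 (mul_pos_of_neg_of_neg hc hx)))
  · exact mul_neg_of_pos_of_neg hx (sub_neg.2 (exp_lt_one_iff.2 (mul_neg_of_neg_of_pos hc hx)))

lemma mul_exp_mul_sub_one_nonpos {c : ℝ} (hc : c < 0) (x : ℝ) :
    x * (exp (c * x) - 1) ≤ 0 := by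
  rcases eq_or_ne x 0 with rfl | hx
  · simp
  · exact (mul_exp_mul_sub_one_neg hc hx).le

lemma tilt_cross_eq {Y : Type*} (p s : Y → ℝ) (a b : ℝ) (y z : Y) :
    (s y - s z) * (p y * exp (-(b * s y)) * (p z * exp (-(a * s z)))
        - p y * exp (-(a * s y)) * (p z * exp (-(b * s z)))) =
      p y * p z * exp (-(a * s y) - b * s z) *
        ((s y - s z) * (exp ((a - b) * (s y - s z)) - 1)) := by
  have hexp : exp (-(b * s y)) * exp (-(a * s z)) =
      exp (-(a * s y) - b * s z) * exp ((a - b) * (s y - s z)) := by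
    rw [← exp_add, ← exp_add]; ring_nf
  have hexp' : exp (-(a * s y)) * exp (-(b * s z)) = exp (-(a * s y) - b * s z) := by
    rw [← exp_add]; ring_nf
  linear_combination (s y - s z) * p y * p z * hexp - (s y - s z) * p y * p z * hexp'

theorem strictAnti_weightedMean_exp_tilt {Y : Type*} [Fintype Y] {p s : Y → ℝ}
    (hp : ∀ y, 0 < p y) (hs : ∃ y z, s y ≠ s z) :
    StrictAnti fun t => weightedMean (fun y => p y * exp (-(t * s y))) s := by
  intro a b hab
  obtain ⟨y₀, z₀, hne⟩ := hs
  have hsum_pos (t : ℝ) : 0 < ∑ y, p y * exp (-(t * s y)) :=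
    sum_pos (fun y _ => by have := hp y; positivity) ⟨y₀, mem_univ _⟩
  have hc : a - b < 0 := sub_neg.2 hab
  refine weightedMean_lt_of_cross_nonpos (hsum_pos a) (hsum_pos b) (fun y z => ?_) ⟨y₀, z₀, ?_⟩
  · rw [tilt_cross_eq]
    exact mul_nonpos_of_nonneg_of_nonpos (by have := hp y; have := hp z; positivity)
      (mul_exp_mul_sub_one_nonpos hc _)
  · rw [tilt_cross_eq]
    exact mul_neg_of_pos_of_neg (by have := hp y₀; have := hp z₀; positivity)
      (mul_exp_mul_sub_one_neg hc (sub_ne_zero.2 hne))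

theorem stmt_9_general {Y : Type*} [Fintype Y]
    (πref : Y → ℝ) (hpos : ∀ y, 0 < πref y)
    (β : ℝ) (hβ : 0 < β) (n : Y → ℕ) (hn : ∃ y1 y2, n y1 ≠ n y2) :
    StrictAntiOn
      (fun lam : ℝ => ∑ y,
        (πref y * Real.exp (-(lam * n y) / β) /
            (∑ y', πref y' * Real.exp (-(lam * n y') / β))) * n y)
      (Set.Ici (0 : ℝ)) := by
  obtain ⟨y₁, y₂, hne⟩ := hn
  have hmean := strictAnti_weightedMean_exp_tilt hpos (s := fun y => (n y : ℝ))
    ⟨y₁, y₂, Nat.cast_injective.ne hne⟩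
  intro a _ b _ hab
  simpa only [Function.comp, id, weightedMean, neg_div, mul_div_right_comm] using
    hmean.comp_strictMono (strictMono_id.div_const hβ) hab

theorem stmt_9 {Y : Type*} [Fintype Y] [Nonempty Y]
    (πref : Y → ℝ) (hpos : ∀ y, 0 < πref y) (hsum : ∑ y, πref y = 1)
    (β : ℝ) (hβ : 0 < β) (n : Y → ℕ) (hn : ∃ y1 y2, n y1 ≠ n y2) :
    StrictAntiOn
      (fun lam : ℝ => ∑ y,
        (πref y * Real.exp (-(lam * n y) / β) /
            (∑ y', πref y' * Real.exp (-(lam * n y') / β))) * n y)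
      (Set.Ici (0 : ℝ)) :=
  stmt_9_general πref hpos β hβ n hn
end

section
/- Let Y be finite nonempty, H ⊆ Y with R_abs ≡ 0 on H and R_abs ≥ 0 on Y, and suppose some y0 ∈ Y \ H has R_abs(y0) > 0. Then the ratio of hallucination probabilities satisfies the quantitative bound π_comp(H)/π_pen(H) = Z_pen/Z_comp ≤ 1/(1 + π_pen(y0)·(exp(R_abs(y0)/β) − 1)) < 1, where π_pen(S) = Σ_{y∈S} π_pen(y). -/
theorem stmt_11 {Y : Type*} [Fintype Y] [Nonempty Y]
    (πref : Y → ℝ) (hpos : ∀ y, 0 < πref y) (hsum : ∑ y, πref y = 1)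
    (β : ℝ) (hβ : 0 < β) (Rpen Rabs : Y → ℝ)
    (habs_nonneg : ∀ y, 0 ≤ Rabs y)
    (H : Finset Y) (hH : H.Nonempty) (hH0 : ∀ y ∈ H, Rabs y = 0)
    (y0 : Y) (hy0H : y0 ∉ H) (hy0 : 0 < Rabs y0) :
    (∑ y ∈ H, πref y * Real.exp ((Rpen y + Rabs y) / β) /
          (∑ y', πref y' * Real.exp ((Rpen y' + Rabs y') / β))) /
        (∑ y ∈ H, πref y * Real.exp (Rpen y / β) /
          (∑ y', πref y' * Real.exp (Rpen y' / β))) =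
      (∑ y', πref y' * Real.exp (Rpen y' / β)) /
        (∑ y', πref y' * Real.exp ((Rpen y' + Rabs y') / β)) ∧
    (∑ y', πref y' * Real.exp (Rpen y' / β)) /
        (∑ y', πref y' * Real.exp ((Rpen y' + Rabs y') / β)) ≤
      1 / (1 + (πref y0 * Real.exp (Rpen y0 / β) /
          (∑ y', πref y' * Real.exp (Rpen y' / β))) *
        (Real.exp (Rabs y0 / β) - 1)) ∧
    1 / (1 + (πref y0 * Real.exp (Rpen y0 / β) /
          (∑ y', πref y' * Real.exp (Rpen y' / β))) *
        (Real.exp (Rabs y0 / β) - 1)) < 1 := by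
  classical
  set Zp := ∑ y', πref y' * Real.exp (Rpen y' / β) with hZp
  set Zc := ∑ y', πref y' * Real.exp ((Rpen y' + Rabs y') / β) with hZc
  have hZppos : 0 < Zp :=
    Finset.sum_pos (fun y _ => mul_pos (hpos y) (Real.exp_pos _)) Finset.univ_nonempty
  have hZcpos : 0 < Zc :=
    Finset.sum_pos (fun y _ => mul_pos (hpos y) (Real.exp_pos _)) Finset.univ_nonempty
  have hS : ∀ y ∈ H, πref y * Real.exp ((Rpen y + Rabs y) / β)
      = πref y * Real.exp (Rpen y / β) := by
    intro y hy; rw [hH0 y hy, add_zero]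
  have hSpos : 0 < ∑ y ∈ H, πref y * Real.exp (Rpen y / β) :=
    Finset.sum_pos (fun y _ => mul_pos (hpos y) (Real.exp_pos _)) hH
  have hexp1 : (1:ℝ) < Real.exp (Rabs y0 / β) := Real.one_lt_exp_iff.2 (by positivity)
  have g0 : 0 < πref y0 * Real.exp (Rpen y0 / β) * (Real.exp (Rabs y0 / β) - 1) := by
    apply mul_pos (mul_pos (hpos y0) (Real.exp_pos _)); linarith
  have hkey : Zp + πref y0 * Real.exp (Rpen y0 / β) * (Real.exp (Rabs y0 / β) - 1) ≤ Zc := by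
    have h1 : ∀ y, πref y * Real.exp (Rpen y / β) ≤ πref y * Real.exp ((Rpen y + Rabs y) / β) := by
      intro y
      apply mul_le_mul_of_nonneg_left _ (hpos y).le
      apply Real.exp_le_exp.2
      apply div_le_div_of_nonneg_right _ hβ.le <;> linarith [habs_nonneg y]
    have hy0eq : πref y0 * Real.exp (Rpen y0 / β)
        + πref y0 * Real.exp (Rpen y0 / β) * (Real.exp (Rabs y0 / β) - 1)
        = πref y0 * Real.exp ((Rpen y0 + Rabs y0) / β) := by
      rw [add_div, Real.exp_add]; ring
    have hsum' := Finset.sum_le_sum (s := Finset.univ.erase y0)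
      (f := fun y => πref y * Real.exp (Rpen y / β))
      (g := fun y => πref y * Real.exp ((Rpen y + Rabs y) / β)) (fun y _ => h1 y)
    have e1 : Zp = πref y0 * Real.exp (Rpen y0 / β)
        + ∑ y ∈ Finset.univ.erase y0, πref y * Real.exp (Rpen y / β) :=
      (Finset.add_sum_erase _ _ (Finset.mem_univ y0)).symm
    have e2 : Zc = πref y0 * Real.exp ((Rpen y0 + Rabs y0) / β)
        + ∑ y ∈ Finset.univ.erase y0, πref y * Real.exp ((Rpen y + Rabs y) / β) :=
      (Finset.add_sum_erase _ _ (Finset.mem_univ y0)).symm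
    rw [e1, e2]
    linarith
  have hdpos : (0:ℝ) < 1 + πref y0 * Real.exp (Rpen y0 / β) / Zp * (Real.exp (Rabs y0 / β) - 1) := by
    have ht : 0 < πref y0 * Real.exp (Rpen y0 / β) / Zp * (Real.exp (Rabs y0 / β) - 1) :=
      mul_pos (div_pos (mul_pos (hpos y0) (Real.exp_pos _)) hZppos) (by linarith)
    linarith
  refine ⟨?_, ?_, ?_⟩
  · rw [← Finset.sum_div, ← Finset.sum_div, Finset.sum_congr rfl hS]
    rw [div_div_div_comm, div_self hSpos.ne', div_div_eq_mul_div, one_mul]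
  · rw [div_le_div_iff₀ hZcpos hdpos]
    have heq : Zp * (1 + πref y0 * Real.exp (Rpen y0 / β) / Zp * (Real.exp (Rabs y0 / β) - 1))
        = Zp + πref y0 * Real.exp (Rpen y0 / β) * (Real.exp (Rabs y0 / β) - 1) := by
      field_simp
    rw [heq, one_mul]
    exact hkey
  · rw [div_lt_one hdpos]
    have : 0 < πref y0 * Real.exp (Rpen y0 / β) / Zp * (Real.exp (Rabs y0 / β) - 1) :=
      mul_pos (div_pos (mul_pos (hpos y0) (Real.exp_pos _)) hZppos) (by linarith)
    linarith
end

section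
/- Let Y be finite nonempty and π_ref strictly positive on Y with β > 0. For rewards R and R' with R'(y) − R(y) = c·1[y ∈ S] for a set S ⊆ Y and constant c > 0, the optimal policies satisfy π_{R'}(S) > π_R(S) whenever ∅ ≠ S ≠ Y, where π_R(S) = Σ_{y∈S} π_R(y) and π_R is the KL-regularized optimal policy for R. -/
theorem stmt_15 {Y : Type*} [Fintype Y] [Nonempty Y] [DecidableEq Y]
    (πref : Y → ℝ) (hpos : ∀ y, 0 < πref y) (hsum : ∑ y, πref y = 1)
    (β : ℝ) (hβ : 0 < β) (S : Finset Y) (hS : S.Nonempty) (hS' : S ≠ Finset.univ)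
    (c : ℝ) (hc : 0 < c) (R R' : Y → ℝ)
    (hR' : ∀ y, R' y - R y = if y ∈ S then c else 0) :
    (∑ y ∈ S, πref y * Real.exp (R y / β) /
        (∑ y', πref y' * Real.exp (R y' / β))) <
      ∑ y ∈ S, πref y * Real.exp (R' y / β) /
        (∑ y', πref y' * Real.exp (R' y' / β)) := by
  set e := Real.exp (c / β) with he_def
  have he : 1 < e := by
    rw [he_def]
    have : 0 < c / β := div_pos hc hβ
    exact Real.one_lt_exp_iff.mpr this
  set w : Y → ℝ := fun y => πref y * Real.exp (R y / β) with hw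
  have hwpos : ∀ y, 0 < w y := fun y => mul_pos (hpos y) (Real.exp_pos _)
  have hR'val : ∀ y, πref y * Real.exp (R' y / β) = if y ∈ S then e * w y else w y := by
    intro y
    have h : R' y = R y + (if y ∈ S then c else 0) := by linarith [hR' y]
    by_cases hy : y ∈ S <;> simp [h, hy, hw, add_div, Real.exp_add, he_def] <;> ring
  set A := ∑ y ∈ S, w y with hA
  set B := ∑ y ∈ Sᶜ, w y with hB
  have hApos : 0 < A := Finset.sum_pos (fun y _ => hwpos y) hS
  have hScne : Sᶜ.Nonempty := by
    rw [Finset.nonempty_iff_ne_empty]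
    intro h
    exact hS' (by simpa [Finset.compl_eq_empty_iff] using h)
  have hBpos : 0 < B := Finset.sum_pos (fun y _ => hwpos y) hScne
  have hZ : ∑ y', πref y' * Real.exp (R y' / β) = A + B := by
    rw [hA, hB, Finset.sum_add_sum_compl]
  have hS2 : ∑ y ∈ S, πref y * Real.exp (R' y / β) = e * A := by
    rw [hA, Finset.mul_sum]
    exact Finset.sum_congr rfl fun y hy => by rw [hR'val y, if_pos hy]
  have hZ' : ∑ y', πref y' * Real.exp (R' y' / β) = e * A + B := by
    rw [← Finset.sum_add_sum_compl S, hS2]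
    congr 1
    exact Finset.sum_congr rfl fun y hy => by
      rw [hR'val y, if_neg (Finset.mem_compl.mp hy)]
  rw [← Finset.sum_div, ← Finset.sum_div, hZ, hZ', ← hA, hS2]
  rw [div_lt_div_iff₀ (by linarith) (by nlinarith)]
  nlinarith [mul_pos hApos hBpos]
end
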